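/- arXiv:1903.07872 — 2 statements merged into one kernel-verified Lean document; each statement's English description precedes it below -/
import Mathlib

section
/- Let α ∈ (0, 2-√2), γ ∈ (0, (α²-4α+2)/2], and define A := (2γ - (α²-4α+2))/(2-α)², ν₁ := (α²-10α+13)γ²/(3(1-α)²(2-α)²), B := |1/3 - ν₁| - (2γ+1)/(2-α)², and F(x) := (1-α)(3-α)/(2-α)² + A x² + B x⁴. Then for all x ∈ [0,1], F(x) ≤ (1-α)(3-α)/(2-α)². -/
/-! With `q = α² - 4α + 2 > 0`, the hypothesis `2γ ≤ q` makes `A ≤ 0`, and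
`A + B = |1/3 - ν₁| - (1-α)(3-α)/(2-α)²`. The quartic `A x² + B x⁴ = A (x² - x⁴) + (A + B) x⁴`
is then nonpositive on `[0, 1]` once `|1/3 - ν₁| ≤ (1-α)(3-α)/(2-α)²`. From below this holds since
`ν₁ ≥ 0` and `(1-α)(3-α)/(2-α)² ≥ 1/3`; from above, `γ² ≤ q²/4` reduces it to a polynomial
inequality in `α` alone. -/

lemma mul_sq_add_mul_pow_four_nonpos {A B x : ℝ} (hA : A ≤ 0) (hAB : A + B ≤ 0)
    (hx : x ^ 2 ≤ 1) : A * x ^ 2 + B * x ^ 4 ≤ 0 := by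
  have hx4 : x ^ 4 ≤ x ^ 2 := by nlinarith [sq_nonneg x]
  calc A * x ^ 2 + B * x ^ 4 = A * (x ^ 2 - x ^ 4) + (A + B) * x ^ 4 := by ring
    _ ≤ 0 := add_nonpos (mul_nonpos_of_nonpos_of_nonneg hA (sub_nonneg.2 hx4))
        (mul_nonpos_of_nonpos_of_nonneg hAB (by positivity))

section

variable {α : ℝ}

lemma lt_one_of_lt_two_sub_sqrt_two (h : α < 2 - √2) : α < 1 := by
  have : 1 < √2 := by simpa using Real.sqrt_lt_sqrt zero_le_one one_lt_two
  linarith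

lemma sq_sub_four_mul_add_two_pos (h : α < 2 - √2) : 0 < α ^ 2 - 4 * α + 2 := by
  have hs : √2 ^ 2 = 2 := Real.sq_sqrt zero_le_two
  nlinarith [Real.sqrt_nonneg 2]

lemma one_third_le_of_sq_sub_four_mul_add_two_pos (hq : 0 < α ^ 2 - 4 * α + 2) :
    1 / 3 ≤ (1 - α) * (3 - α) / (2 - α) ^ 2 := by
  have h2α : 0 < (2 - α) ^ 2 := by nlinarith
  rw [div_le_div_iff₀ three_pos h2α]
  nlinarith

lemma sq_sub_ten_mul_add_thirteen_mul_le (hα0 : 0 ≤ α) (hα1 : α ≤ 1)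
    (hq : 0 ≤ α ^ 2 - 4 * α + 2) :
    (α ^ 2 - 10 * α + 13) * (α ^ 2 - 4 * α + 2) ^ 2 ≤
      4 * (1 - α) ^ 2 * (2 - α) ^ 2 + 12 * (1 - α) ^ 3 * (3 - α) := by
  have hC : 0 ≤ -α ^ 3 + 14 * α ^ 2 - 39 * α + 40 := by nlinarith [mul_nonneg hα0 hα0]
  have hgap : 4 * (1 - α) ^ 2 * (2 - α) ^ 2 + 12 * (1 - α) ^ 3 * (3 - α)
      - (α ^ 2 - 10 * α + 13) * (α ^ 2 - 4 * α + 2) ^ 2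
      = α * (α ^ 2 - 4 * α + 2) * (-α ^ 3 + 14 * α ^ 2 - 39 * α + 40) + 10 * α ^ 2 := by ring
  nlinarith [mul_nonneg (mul_nonneg hα0 hq) hC]

variable {γ : ℝ}

lemma nu_le_one_third_add (hα0 : 0 ≤ α) (hα1 : α < 1) (hq : 0 ≤ α ^ 2 - 4 * α + 2)
    (hγ0 : 0 ≤ γ) (hγ : γ ≤ (α ^ 2 - 4 * α + 2) / 2) :
    (α ^ 2 - 10 * α + 13) * γ ^ 2 / (3 * (1 - α) ^ 2 * (2 - α) ^ 2) ≤
      1 / 3 + (1 - α) * (3 - α) / (2 - α) ^ 2 := by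
  have h1α : 0 < 1 - α := sub_pos.2 hα1
  have h2α : 0 < 2 - α := by linarith
  have hγsq : 4 * γ ^ 2 ≤ (α ^ 2 - 4 * α + 2) ^ 2 := by nlinarith
  have hpoly := sq_sub_ten_mul_add_thirteen_mul_le hα0 hα1.le hq
  have hN : 0 ≤ α ^ 2 - 10 * α + 13 := by nlinarith
  rw [div_le_iff₀ (by positivity)]
  have hrhs : (1 / 3 + (1 - α) * (3 - α) / (2 - α) ^ 2) * (3 * (1 - α) ^ 2 * (2 - α) ^ 2)
      = (1 - α) ^ 2 * (2 - α) ^ 2 + 3 * (1 - α) ^ 3 * (3 - α) := by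
    field_simp
  rw [hrhs]
  nlinarith [mul_le_mul_of_nonneg_left hγsq hN]

lemma abs_one_third_sub_nu_le (hα0 : 0 ≤ α) (hα1 : α < 1) (hq : 0 < α ^ 2 - 4 * α + 2)
    (hγ0 : 0 ≤ γ) (hγ : γ ≤ (α ^ 2 - 4 * α + 2) / 2) :
    |1 / 3 - (α ^ 2 - 10 * α + 13) * γ ^ 2 / (3 * (1 - α) ^ 2 * (2 - α) ^ 2)| ≤
      (1 - α) * (3 - α) / (2 - α) ^ 2 := by
  have hν0 : 0 ≤ (α ^ 2 - 10 * α + 13) * γ ^ 2 / (3 * (1 - α) ^ 2 * (2 - α) ^ 2) :=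
    div_nonneg (mul_nonneg (by nlinarith) (sq_nonneg γ)) (by positivity)
  have hν := nu_le_one_third_add hα0 hα1 hq.le hγ0 hγ
  have h13 := one_third_le_of_sq_sub_four_mul_add_two_pos hq
  rw [abs_le]
  constructor <;> linarith

end

theorem stmt_12 (α γ : ℝ) (h1 : 0 < α) (h2 : α < 2 - Real.sqrt 2)
    (h3 : 0 < γ) (h4 : γ ≤ (α ^ 2 - 4 * α + 2) / 2)
    (A ν₁ B : ℝ) (hA : A = (2 * γ - (α ^ 2 - 4 * α + 2)) / (2 - α) ^ 2)
    (hν : ν₁ = (α ^ 2 - 10 * α + 13) * γ ^ 2 / (3 * (1 - α) ^ 2 * (2 - α) ^ 2))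
    (hB : B = |1 / 3 - ν₁| - (2 * γ + 1) / (2 - α) ^ 2)
    (x : ℝ) (hx0 : 0 ≤ x) (hx1 : x ≤ 1) :
    (1 - α) * (3 - α) / (2 - α) ^ 2 + A * x ^ 2 + B * x ^ 4 ≤
      (1 - α) * (3 - α) / (2 - α) ^ 2 := by
  have hα1 := lt_one_of_lt_two_sub_sqrt_two h2
  have hq := sq_sub_four_mul_add_two_pos h2
  have hA0 : A ≤ 0 := hA ▸ div_nonpos_of_nonpos_of_nonneg (by linarith) (sq_nonneg _)
  have hsum : A + B = |1 / 3 - ν₁| - (1 - α) * (3 - α) / (2 - α) ^ 2 := by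
    have : (2 : ℝ) - α ≠ 0 := by linarith
    rw [hA, hB]
    field_simp
    ring
  have hAB : A + B ≤ 0 := by
    rw [hsum, hν]
    exact sub_nonpos.2 (abs_one_third_sub_nu_le h1.le hα1 hq h3.le h4)
  have hx : x ^ 2 ≤ 1 := pow_le_one₀ hx0 hx1
  linarith [mul_sq_add_mul_pow_four_nonpos hA0 hAB hx]
end

section
/- Let ω be analytic on the unit disk with ω(0) = 0 and |ω(z)| < 1 for all z in the disk, and write ω(z) = c₁z + c₂z² + c₃z³ + ⋯. If c₁ is real and 0 ≤ c₁ ≤ 1, then |c₃| ≤ 1 - c₁² - |c₂|²/(1 + c₁). -/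
/-!
Write `ω = z g` with `g = dslope ω 0`; by the Schwarz lemma `g` maps the disc into the closed disc,
and the Taylor coefficients of `g` are `c₁, c₂, c₃, …`. If `|g| = 1` somewhere, `g` is constant and
`c₂ = c₃ = 0`. Otherwise the Schur transform `g₁ = (g - c₁) / (z (1 - c̄₁ g))` again maps the disc
into the closed disc, and `g₁ = dslope g 0 / (1 - c̄₁ g)` gives
`g₁(0) = c₂ / (1 - |c₁|²)` and `g₁'(0) = c₃ / (1 - |c₁|²) + c̄₁ c₂² / (1 - |c₁|²)²`.
Schwarz–Pick at the origin, `|g₁'(0)| ≤ 1 - |g₁(0)|²`, is then the Schur–Prokhorov inequality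
`|c₃ (1 - |c₁|²) + c̄₁ c₂²| ≤ (1 - |c₁|²)² - |c₂|²`, and for real `c₁` the triangle inequality
turns it into the bound.
-/

open Metric Set Complex ComplexConjugate

theorem AnalyticAt.iteratedDeriv_dslope_div_factorial {𝕜 : Type*} [NontriviallyNormedField 𝕜]
    [CompleteSpace 𝕜] [CharZero 𝕜] {f : 𝕜 → 𝕜} {x : 𝕜} (hf : AnalyticAt 𝕜 f x) (n : ℕ) :
    iteratedDeriv n (dslope f x) x / n.factorial =
      iteratedDeriv (n + 1) f x / (n + 1).factorial := by
  have hp := hf.hasFPowerSeriesAt.has_fpower_series_dslope_fslope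
  have := congrArg (·.coeff n) (hp.analyticAt.hasFPowerSeriesAt.eq_formalMultilinearSeries hp)
  simpa [FormalMultilinearSeries.coeff_fslope] using this

theorem dslope_sub_mul {𝕜 : Type*} [NontriviallyNormedField 𝕜] {f g : 𝕜 → 𝕜} {a : 𝕜}
    (hf : DifferentiableAt 𝕜 f a) (hg : DifferentiableAt 𝕜 g a) :
    dslope (fun z => (f z - f a) * g z) a = fun z => dslope f a z * g z := by
  ext z
  rcases eq_or_ne z a with rfl | hz
  · simp [dslope_same, deriv_fun_mul (hf.sub_const _) hg]
  · simp only [dslope_of_ne _ hz, slope_def_field, sub_self, zero_mul, sub_zero]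
    ring

theorem normSq_one_sub_conj_mul_sub_normSq_sub (b w : ℂ) :
    normSq (1 - conj b * w) - normSq (w - b) = (1 - normSq b) * (1 - normSq w) := by
  simp only [normSq_apply, sub_re, sub_im, one_re, one_im, mul_re, mul_im, conj_re, conj_im]
  ring

theorem norm_one_sub_ofReal_sq {r : ℝ} (hr : r ^ 2 ≤ 1) : ‖1 - (r : ℂ) ^ 2‖ = 1 - r ^ 2 := by
  rw [← ofReal_pow, ← ofReal_one, ← ofReal_sub, Complex.norm_of_nonneg (sub_nonneg.mpr hr)]

theorem one_sub_conj_mul_ne_zero {b w : ℂ} (hb : ‖b‖ < 1) (hw : ‖w‖ < 1) :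
    1 - conj b * w ≠ 0 := by
  have : ‖conj b * w‖ < 1 := by
    rw [norm_mul, norm_conj]
    nlinarith [norm_nonneg b, norm_nonneg w]
  exact sub_ne_zero.mpr fun h => by simp [← h] at this

theorem norm_sub_div_one_sub_conj_mul_lt_one {b w : ℂ} (hb : ‖b‖ < 1) (hw : ‖w‖ < 1) :
    ‖(w - b) / (1 - conj b * w)‖ < 1 := by
  have hden := one_sub_conj_mul_ne_zero hb hw
  rw [norm_div, div_lt_one (norm_pos_iff.mpr hden), ← sq_lt_sq₀ (norm_nonneg _) (norm_nonneg _),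
    ← normSq_eq_norm_sq, ← normSq_eq_norm_sq, ← sub_pos, normSq_one_sub_conj_mul_sub_normSq_sub]
  have hb' : normSq b < 1 := by rw [normSq_eq_norm_sq]; nlinarith [norm_nonneg b]
  have hw' : normSq w < 1 := by rw [normSq_eq_norm_sq]; nlinarith [norm_nonneg w]
  exact mul_pos (sub_pos.mpr hb') (sub_pos.mpr hw')

theorem eqOn_const_or_mapsTo_ball {φ : ℂ → ℂ} (hd : DifferentiableOn ℂ φ (ball 0 1))
    (hφ : MapsTo φ (ball 0 1) (closedBall 0 1)) :
    EqOn φ (fun _ => φ 0) (ball 0 1) ∨ MapsTo φ (ball 0 1) (ball 0 1) := by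
  refine or_iff_not_imp_right.mpr fun hlt => ?_
  obtain ⟨z, hz, hz1⟩ : ∃ z ∈ ball (0 : ℂ) 1, ‖φ z‖ = 1 := by
    obtain ⟨z, hz, h1⟩ := not_forall₂.mp hlt
    rw [mem_ball_zero_iff, not_lt] at h1
    exact ⟨z, hz, le_antisymm (mem_closedBall_zero_iff.mp (hφ hz)) h1⟩
  have hmax : IsMaxOn (norm ∘ φ) (ball 0 1) z := fun w hw => by
    simpa [hz1] using mem_closedBall_zero_iff.mp (hφ hw)
  have hconst := eqOn_of_isPreconnected_of_isMaxOn_norm (convex_ball (0 : ℂ) 1).isPreconnected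
    isOpen_ball hd hz hmax
  rw [hconst (mem_ball_self one_pos)]
  exact hconst

/-- The Schur transform `(φ z - φ 0) / (z (1 - conj (φ 0) φ z))`, written with `dslope` so that
it has its limiting value at `0`. -/
noncomputable def schurTransform (φ : ℂ → ℂ) (z : ℂ) : ℂ :=
  dslope φ 0 z / (1 - conj (φ 0) * φ z)

section SchurTransform

variable {φ : ℂ → ℂ}

theorem schurTransform_zero : schurTransform φ 0 = deriv φ 0 / (1 - ‖φ 0‖ ^ 2) := by
  rw [schurTransform, dslope_same, conj_mul']

theorem differentiableOn_schurTransform (hd : DifferentiableOn ℂ φ (ball 0 1))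
    (hφ : MapsTo φ (ball 0 1) (ball 0 1)) : DifferentiableOn ℂ (schurTransform φ) (ball 0 1) :=
  ((differentiableOn_dslope (ball_mem_nhds 0 one_pos)).mpr hd).div
    ((differentiableOn_const 1).sub ((differentiableOn_const _).mul hd)) fun _ hz =>
    one_sub_conj_mul_ne_zero (mem_ball_zero_iff.mp (hφ (mem_ball_self one_pos)))
      (mem_ball_zero_iff.mp (hφ hz))

theorem schurTransform_eq_dslope (hd : DifferentiableAt ℂ φ 0) (hφ : ‖φ 0‖ < 1) :
    schurTransform φ = dslope (fun z => (φ z - φ 0) / (1 - conj (φ 0) * φ z)) 0 := by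
  have hden : DifferentiableAt ℂ (fun z => (1 - conj (φ 0) * φ z)⁻¹) 0 :=
    ((differentiableAt_const _).sub ((differentiableAt_const _).mul hd)).inv
      (one_sub_conj_mul_ne_zero hφ hφ)
  simp only [div_eq_mul_inv, dslope_sub_mul hd hden]
  rfl

theorem mapsTo_schurTransform (hd : DifferentiableOn ℂ φ (ball 0 1))
    (hφ : MapsTo φ (ball 0 1) (ball 0 1)) :
    MapsTo (schurTransform φ) (ball 0 1) (closedBall 0 1) := by
  have h0 := mem_ball_self (x := (0 : ℂ)) one_pos
  have hb : ‖φ 0‖ < 1 := mem_ball_zero_iff.mp (hφ h0)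
  have hmd : DifferentiableOn ℂ (fun z => (φ z - φ 0) / (1 - conj (φ 0) * φ z)) (ball 0 1) :=
    (hd.sub_const _).div ((differentiableOn_const 1).sub ((differentiableOn_const _).mul hd))
      fun _ hz => one_sub_conj_mul_ne_zero hb (mem_ball_zero_iff.mp (hφ hz))
  have hmaps : MapsTo (fun z => (φ z - φ 0) / (1 - conj (φ 0) * φ z)) (ball 0 1)
      (closedBall ((φ 0 - φ 0) / (1 - conj (φ 0) * φ 0)) 1) := fun z hz => by
    simpa using (norm_sub_div_one_sub_conj_mul_lt_one hb (mem_ball_zero_iff.mp (hφ hz))).le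
  intro z hz
  rw [schurTransform_eq_dslope (hd.differentiableAt (isOpen_ball.mem_nhds h0)) hb]
  simpa using norm_dslope_le_div_of_mapsTo_ball hmd hmaps hz

theorem deriv_schurTransform_zero (hd : DifferentiableAt ℂ (dslope φ 0) 0) (hφ : ‖φ 0‖ < 1) :
    deriv (schurTransform φ) 0 = (deriv (dslope φ 0) 0 * (1 - ‖φ 0‖ ^ 2) +
      conj (φ 0) * deriv φ 0 ^ 2) / (1 - ‖φ 0‖ ^ 2) ^ 2 := by
  have hφd : DifferentiableAt ℂ φ 0 := hd.of_dslope
  have hden := one_sub_conj_mul_ne_zero hφ hφ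
  change deriv (fun z => dslope φ 0 z / (1 - conj (φ 0) * φ z)) 0 = _
  rw [deriv_fun_div hd
      ((differentiableAt_const _).fun_sub ((differentiableAt_const _).fun_mul hφd)) hden,
    deriv_const_sub, deriv_const_mul _ hφd, dslope_same, conj_mul']
  ring

theorem norm_deriv_le_one_sub_sq (hd : DifferentiableOn ℂ φ (ball 0 1))
    (hφ : MapsTo φ (ball 0 1) (closedBall 0 1)) : ‖deriv φ 0‖ ≤ 1 - ‖φ 0‖ ^ 2 := by
  have h0 := mem_ball_self (x := (0 : ℂ)) one_pos
  rcases eqOn_const_or_mapsTo_ball hd hφ with hconst | hlt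
  · rw [(hconst.eventuallyEq_of_mem (ball_mem_nhds 0 one_pos)).deriv_eq, deriv_const, norm_zero,
      sub_nonneg]
    exact pow_le_one₀ (norm_nonneg _) (mem_closedBall_zero_iff.mp (hφ h0))
  · have hb : ‖φ 0‖ < 1 := mem_ball_zero_iff.mp (hlt h0)
    have h := mem_closedBall_zero_iff.mp (mapsTo_schurTransform hd hlt h0)
    have hs : 0 < 1 - ‖φ 0‖ ^ 2 := by nlinarith [norm_nonneg (φ 0)]
    rwa [schurTransform_zero, norm_div, norm_one_sub_ofReal_sq (sub_pos.mp hs).le,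
      div_le_one hs] at h

theorem norm_deriv_dslope_mul_add_le (hd : DifferentiableOn ℂ φ (ball 0 1))
    (hφ : MapsTo φ (ball 0 1) (ball 0 1)) :
    ‖deriv (dslope φ 0) 0 * (1 - ‖φ 0‖ ^ 2) + conj (φ 0) * deriv φ 0 ^ 2‖ ≤
      (1 - ‖φ 0‖ ^ 2) ^ 2 - ‖deriv φ 0‖ ^ 2 := by
  have h0 := mem_ball_self (x := (0 : ℂ)) one_pos
  have hb : ‖φ 0‖ < 1 := mem_ball_zero_iff.mp (hφ h0)
  have hs : 0 < 1 - ‖φ 0‖ ^ 2 := by nlinarith [norm_nonneg (φ 0)]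
  have hdd : DifferentiableAt ℂ (dslope φ 0) 0 :=
    ((differentiableOn_dslope (ball_mem_nhds 0 one_pos)).mpr hd).differentiableAt
      (ball_mem_nhds 0 one_pos)
  have h := norm_deriv_le_one_sub_sq (differentiableOn_schurTransform hd hφ)
    (mapsTo_schurTransform hd hφ)
  rw [deriv_schurTransform_zero hdd hb, schurTransform_zero, norm_div, norm_div, norm_pow,
    norm_one_sub_ofReal_sq (sub_pos.mp hs).le,
    div_pow, div_le_iff₀ (by positivity), sub_mul, one_mul, div_mul_cancel₀ _ (by positivity)] at h
  exact h

end SchurTransform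

theorem norm_le_of_norm_mul_add_mul_sq_le {A : ℝ} (hA0 : 0 ≤ A) (hA1 : A < 1) {u v : ℂ}
    (h : ‖v * (1 - A ^ 2) + A * u ^ 2‖ ≤ (1 - A ^ 2) ^ 2 - ‖u‖ ^ 2) :
    ‖v‖ ≤ 1 - A ^ 2 - ‖u‖ ^ 2 / (1 + A) := by
  have hs : 0 < 1 - A ^ 2 := by nlinarith
  have htri : ‖v‖ * (1 - A ^ 2) ≤ ‖v * (1 - A ^ 2) + A * u ^ 2‖ + A * ‖u‖ ^ 2 := by
    have := norm_sub_le (v * (1 - A ^ 2) + A * u ^ 2) (A * u ^ 2)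
    rwa [add_sub_cancel_right, norm_mul, norm_mul, norm_pow, Complex.norm_of_nonneg hA0,
      norm_one_sub_ofReal_sq (sub_pos.mp hs).le] at this
  rw [show 1 - A ^ 2 - ‖u‖ ^ 2 / (1 + A) = ((1 - A ^ 2) ^ 2 - (1 - A) * ‖u‖ ^ 2) / (1 - A ^ 2) by
    field_simp; ring, le_div_iff₀ hs]
  linarith

theorem stmt_14 (ω : ℂ → ℂ) (c : ℕ → ℂ)
    (hω : AnalyticOn ℂ ω (Metric.ball 0 1))
    (h0 : ω 0 = 0)
    (hb : ∀ z ∈ Metric.ball (0 : ℂ) 1, ‖ω z‖ < 1)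
    (hc : ∀ n, c n = iteratedDeriv n ω 0 / (n.factorial : ℂ))
    (him : (c 1).im = 0) (h1 : 0 ≤ (c 1).re) (h2 : (c 1).re ≤ 1) :
    ‖c 3‖ ≤ 1 - (c 1).re ^ 2 - ‖c 2‖ ^ 2 / (1 + (c 1).re) := by
  have hωA : AnalyticOnNhd ℂ ω (ball 0 1) := isOpen_ball.analyticOn_iff_analyticOnNhd.mp hω
  set g := dslope ω 0
  have hgA : AnalyticOnNhd ℂ g (ball 0 1) :=
    ((differentiableOn_dslope (ball_mem_nhds 0 one_pos)).mpr hω.differentiableOn).analyticOnNhd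
      isOpen_ball
  have hg : MapsTo g (ball 0 1) (closedBall 0 1) := fun z hz => by
    simpa using norm_dslope_le_div_of_mapsTo_ball hω.differentiableOn
      (fun w hw => by simpa [h0] using (hb w hw).le) hz
  have hcg (n : ℕ) : c (n + 1) = iteratedDeriv n g 0 / n.factorial := by
    rw [hc, (hωA 0 (mem_ball_self one_pos)).iteratedDeriv_dslope_div_factorial]
  rcases eqOn_const_or_mapsTo_ball hgA.differentiableOn hg with hconst | hlt
  · have hg' (n : ℕ) : iteratedDeriv (n + 1) g 0 = 0 := by
      rw [(hconst.eventuallyEq_of_mem (ball_mem_nhds 0 one_pos)).iteratedDeriv_eq,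
        iteratedDeriv_const, if_neg n.succ_ne_zero]
    rw [hcg 1, hcg 2, hg', hg']
    simpa [abs_of_nonneg h1] using h2
  · have hc1 : c 1 = g 0 := by simpa using hcg 0
    have hg0 : g 0 = (c 1).re := by
      rw [← hc1]
      exact Complex.ext rfl (by simp [him])
    have hA : (c 1).re < 1 := by
      simpa [hg0, abs_of_nonneg h1] using hlt (mem_ball_self one_pos)
    have hc2 : c 2 = deriv g 0 := by simpa using hcg 1
    have hc3 : c 3 = deriv (dslope g 0) 0 := by
      rw [hcg 2, ← (hgA 0 (mem_ball_self one_pos)).iteratedDeriv_dslope_div_factorial 1]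
      simp
    refine norm_le_of_norm_mul_add_mul_sq_le h1 hA ?_
    have := norm_deriv_dslope_mul_add_le hgA.differentiableOn hlt
    rwa [hg0, ← hc2, ← hc3, conj_ofReal, Complex.norm_of_nonneg h1] at this
end
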